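/- Let M ∈ ℚ[[X, U]] be the two-variable formal power series whose coefficient of X^n U^k is the number of bicolored Motzkin paths of length n with exactly k steps in {U, O1}. Then M satisfies the functional equation M = 1 + (X + X·U)·M + U·X²·M². -/

import Mathlib

/-!
A nonempty Motzkin word is uniquely `O2 w`, `O1 w` or `U p D q` with `w`, `p`, `q` Motzkin words,
the `D` being the first return to the axis. Grading words by `X^length U^#{U, O1}`, a
degree-preserving bijection preserves generating series, disjoint unions add them and
concatenation multiplies them, so the three cases contribute `X M`, `X U M` and `U X² M²`.
-/

/-- The four kinds of steps: up, down, and two colors of horizontal steps. -/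
inductive Step where
  | U : Step
  | D : Step
  | O1 : Step
  | O2 : Step
deriving DecidableEq

instance : Fintype Step :=
  ⟨{Step.U, Step.D, Step.O1, Step.O2}, fun x => by cases x <;> simp⟩

/-- Weight of a step: U has weight 1, D has weight −1, O1 and O2 weight 0. -/
def Step.wt : Step → ℤ
  | .U => 1
  | .D => -1
  | .O1 => 0
  | .O2 => 0

/-- Height of a step word after its first `i` steps. -/
def stepHeight {n : ℕ} (r : Fin n → Step) (i : ℕ) : ℤ :=
  ∑ j ∈ Finset.univ.filter (fun j : Fin n => (j : ℕ) < i), (r j).wt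

/-- Partial sum of a `±1`-sequence after its first `i` entries. -/
def partialSum {n : ℕ} (p : Fin n → ℤ) (i : ℕ) : ℤ :=
  ∑ j ∈ Finset.univ.filter (fun j : Fin n => (j : ℕ) < i), p j

/-- Number of bicolored Motzkin paths of length `n` with exactly `k` steps in
`{U, O1}`: step words staying weakly above the axis and ending at height 0. -/
noncomputable def bicoloredMotzkinCount (n k : ℕ) : ℕ :=
  Nat.card {r : Fin n → Step //
    (∀ i ∈ Finset.range n, 0 ≤ stepHeight r (i + 1)) ∧
    stepHeight r n = 0 ∧
    (Finset.univ.filter fun i => r i = Step.U ∨ r i = Step.O1).card = k}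

/-- Number of bilateral Motzkin paths of length `n` with exactly `k` steps in
`{U, O1}`: step words ending at height 0. -/
noncomputable def bilateralMotzkinCount (n k : ℕ) : ℕ :=
  Nat.card {r : Fin n → Step //
    stepHeight r n = 0 ∧
    (Finset.univ.filter fun i => r i = Step.U ∨ r i = Step.O1).card = k}

/-- The generating function `M ∈ ℚ[[X,U]]` of bicolored Motzkin paths
(variable 0 is `X`, marking the length; variable 1 is `U`, marking the number
of steps in `{U, O1}`). -/
noncomputable def Mser : MvPowerSeries (Fin 2) ℚ :=
  fun d => (bicoloredMotzkinCount (d 0) (d 1) : ℚ)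

/-- The generating function `W ∈ ℚ[[X,U]]` of bilateral Motzkin paths
(variable 0 is `X`, marking the length; variable 1 is `U`, marking the number
of steps in `{U, O1}`). -/
noncomputable def Wser : MvPowerSeries (Fin 2) ℚ :=
  fun d => (bilateralMotzkinCount (d 0) (d 1) : ℚ)

open MvPowerSeries Finset
open Finsupp (single)

section GenSeries

variable {σ α β : Type*} (R : Type*) [Semiring R]

/-- `Nat.card` counts an infinite fiber as `0`, so additivity and multiplicativity below need
finite fibers. -/
noncomputable def genSeries (deg : α → σ →₀ ℕ) : MvPowerSeries σ R :=
  fun d => Nat.card {a // deg a = d}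

theorem coeff_genSeries (deg : α → σ →₀ ℕ) (d : σ →₀ ℕ) :
    coeff d (genSeries R deg) = Nat.card {a // deg a = d} := rfl

theorem genSeries_congr (e : α ≃ β) {f : α → σ →₀ ℕ} {g : β → σ →₀ ℕ}
    (h : ∀ a, g (e a) = f a) : genSeries R g = genSeries R f := by
  ext d
  simp only [coeff_genSeries]
  exact congrArg _ (Nat.card_congr (e.subtypeEquiv fun a => by rw [h]).symm)

theorem genSeries_unit [DecidableEq σ] (e : σ →₀ ℕ) :
    genSeries R (fun _ : Unit => e) = monomial e 1 := by
  ext d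
  rw [coeff_genSeries, coeff_monomial]
  split_ifs with h
  · subst h; simp
  · simp [Ne.symm h]

theorem genSeries_const_add (e : σ →₀ ℕ) (f : α → σ →₀ ℕ) :
    genSeries R (fun a => e + f a) = monomial e 1 * genSeries R f := by
  ext d
  rw [coeff_monomial_mul, coeff_genSeries, coeff_genSeries, one_mul]
  split_ifs with h
  · congr 1
    exact Nat.card_congr (Equiv.subtypeEquivRight fun a => by
      rw [eq_tsub_iff_add_eq_of_le h, add_comm])
  · have : IsEmpty {a // e + f a = d} := ⟨fun a => h (a.2 ▸ le_self_add)⟩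
    simp

variable {f : α → σ →₀ ℕ} {g : β → σ →₀ ℕ}

instance finite_fiber_const_add (e : σ →₀ ℕ) [∀ d, Finite {a // f a = d}] (d : σ →₀ ℕ) :
    Finite {a // e + f a = d} :=
  Finite.of_injective (fun a => (⟨a.1, by simp [← a.2]⟩ : {a // f a = d - e}))
    fun _ _ h => Subtype.ext (congrArg (·.1) h)

instance finite_fiber_sumElim [∀ d, Finite {a // f a = d}] [∀ d, Finite {b // g b = d}]
    (d : σ →₀ ℕ) : Finite {x // Sum.elim f g x = d} :=
  Finite.of_equiv ({a // f a = d} ⊕ {b // g b = d})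
    (Equiv.subtypeSum (p := fun x => Sum.elim f g x = d)).symm

theorem genSeries_sumElim [∀ d, Finite {a // f a = d}] [∀ d, Finite {b // g b = d}] :
    genSeries R (Sum.elim f g) = genSeries R f + genSeries R g := by
  ext d
  simp only [map_add, coeff_genSeries, Nat.card_congr Equiv.subtypeSum, Nat.card_sum,
    Sum.elim_inl, Sum.elim_inr, Nat.cast_add]

variable [DecidableEq σ]

def fiberProdEquiv (f : α → σ →₀ ℕ) (g : β → σ →₀ ℕ) (d : σ →₀ ℕ) :
    {p : α × β // f p.1 + g p.2 = d} ≃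
      Σ x : antidiagonal d, {a // f a = x.1.1} × {b // g b = x.1.2} where
  toFun p := ⟨⟨(f p.1.1, g p.1.2), mem_antidiagonal.2 p.2⟩, ⟨p.1.1, rfl⟩, ⟨p.1.2, rfl⟩⟩
  invFun x := ⟨(x.2.1, x.2.2), by rw [x.2.1.2, x.2.2.2]; exact mem_antidiagonal.1 x.1.2⟩
  left_inv _ := rfl
  right_inv := by
    rintro ⟨⟨⟨i, j⟩, h⟩, ⟨a, ha⟩, ⟨b, hb⟩⟩
    dsimp only at ha hb
    subst ha hb
    rfl

instance finite_fiber_prod [∀ d, Finite {a // f a = d}] [∀ d, Finite {b // g b = d}]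
    (d : σ →₀ ℕ) : Finite {p : α × β // f p.1 + g p.2 = d} :=
  Finite.of_equiv _ (fiberProdEquiv f g d).symm

theorem genSeries_prod [∀ d, Finite {a // f a = d}] [∀ d, Finite {b // g b = d}] :
    genSeries R (fun p : α × β => f p.1 + g p.2) = genSeries R f * genSeries R g := by
  ext d
  rw [coeff_mul, coeff_genSeries, Nat.card_congr (fiberProdEquiv f g d), Nat.card_sigma,
    ← sum_coe_sort (antidiagonal d)]
  push_cast [Nat.card_prod]
  rfl

end GenSeries

noncomputable def Step.deg : Step → Fin 2 →₀ ℕ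
  | .U | .O1 => single 0 1 + single 1 1
  | .D | .O2 => single 0 1

theorem Step.deg_eq (s : Step) :
    s.deg = single 0 1 + single 1 (if s = .U ∨ s = .O1 then 1 else 0) := by
  cases s <;> simp [Step.deg]

def wordHeight (l : List Step) : ℤ := (l.map Step.wt).sum

noncomputable def wordDegree (l : List Step) : Fin 2 →₀ ℕ := (l.map Step.deg).sum

def IsMotzkinWord (l : List Step) : Prop :=
  (∀ i, 0 ≤ wordHeight (l.take i)) ∧ wordHeight l = 0

abbrev MotzkinWord := {l : List Step // IsMotzkinWord l}

noncomputable def MotzkinWord.degree (w : MotzkinWord) : Fin 2 →₀ ℕ := wordDegree w.1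

@[simp] theorem wordHeight_nil : wordHeight [] = 0 := rfl

@[simp] theorem wordHeight_cons (s : Step) (l : List Step) :
    wordHeight (s :: l) = s.wt + wordHeight l := by
  simp [wordHeight]

@[simp] theorem wordHeight_append (l l' : List Step) :
    wordHeight (l ++ l') = wordHeight l + wordHeight l' := by
  simp [wordHeight]

theorem wordHeight_take_append (l l' : List Step) (i : ℕ) :
    wordHeight ((l ++ l').take i) =
      wordHeight (l.take i) + wordHeight (l'.take (i - l.length)) := by
  rw [List.take_append, wordHeight_append]

@[simp] theorem wordDegree_cons (s : Step) (l : List Step) :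
    wordDegree (s :: l) = s.deg + wordDegree l := by
  simp [wordDegree]

@[simp] theorem wordDegree_append (l l' : List Step) :
    wordDegree (l ++ l') = wordDegree l + wordDegree l' := by
  simp [wordDegree]

theorem isMotzkinWord_nil : IsMotzkinWord [] := ⟨fun _ => by simp, rfl⟩

theorem isMotzkinWord_cons_iff_of_wt_eq_zero {s : Step} (hs : s.wt = 0) {l : List Step} :
    IsMotzkinWord (s :: l) ↔ IsMotzkinWord l := by
  simp only [IsMotzkinWord, wordHeight_cons, hs, zero_add]
  constructor
  · rintro ⟨hpre, htot⟩
    refine ⟨fun i => ?_, htot⟩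
    simpa [hs] using hpre (i + 1)
  · rintro ⟨hpre, htot⟩
    refine ⟨fun i => ?_, htot⟩
    cases i with
    | zero => simp
    | succ i => simpa [hs] using hpre i

theorem not_isMotzkinWord_D_cons (l : List Step) : ¬ IsMotzkinWord (.D :: l) := fun h => by
  simpa [Step.wt] using h.1 1

theorem IsMotzkinWord.U_cons_append_D_cons {p q : List Step} (hp : IsMotzkinWord p)
    (hq : IsMotzkinWord q) : IsMotzkinWord (.U :: (p ++ .D :: q)) := by
  have hDq : ∀ i, -1 ≤ wordHeight ((Step.D :: q).take i) := by
    rintro (_ | i)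
    · simp
    · simpa [Step.wt] using hq.1 i
  refine ⟨?_, by simp [hp.2, hq.2, Step.wt]⟩
  rintro (_ | i)
  · simp
  · have := hp.1 i
    have := hDq (i - p.length)
    simp only [List.take_succ_cons, wordHeight_cons, wordHeight_take_append, Step.wt]
    omega

-- Otherwise `p ++ [D]` would be a prefix of `p'` of height `-1`.
theorem IsMotzkinWord.length_le_of_append_D_cons_eq {p p' q q' : List Step}
    (hp : IsMotzkinWord p) (hp' : IsMotzkinWord p') (h : p ++ .D :: q = p' ++ .D :: q') :
    p'.length ≤ p.length := by
  by_contra! hlt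
  have hprefix : p'.take (p.length + 1) = p ++ [.D] := by
    have := congrArg (List.take (p.length + 1)) h
    rw [List.take_append, List.take_append, List.take_of_length_le (by omega),
      show p.length + 1 - p'.length = 0 by omega] at this
    simpa using this.symm
  have := hp'.1 (p.length + 1)
  simp [hprefix, hp.2, Step.wt] at this

theorem IsMotzkinWord.append_D_cons_inj {p p' q q' : List Step}
    (hp : IsMotzkinWord p) (hp' : IsMotzkinWord p') (h : p ++ .D :: q = p' ++ .D :: q') :
    p = p' ∧ q = q' := by
  have hlen := le_antisymm (hp'.length_le_of_append_D_cons_eq hp h.symm)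
    (hp.length_le_of_append_D_cons_eq hp' h)
  obtain ⟨rfl, hq⟩ := List.append_inj h hlen
  exact ⟨rfl, List.cons_injective hq⟩

theorem exists_eq_append_D_cons_of_wordHeight {t : List Step}
    (hlow : ∀ i, -1 ≤ wordHeight (t.take i)) (ht : wordHeight t = -1) :
    ∃ p q, t = p ++ .D :: q ∧ IsMotzkinWord p ∧ IsMotzkinWord q := by
  classical
  have hex : ∃ i, wordHeight (t.take (i + 1)) < 0 :=
    ⟨t.length, by rw [List.take_of_length_le (by omega), ht]; omega⟩
  obtain ⟨j, hj_def⟩ : ∃ j, j = Nat.find hex := ⟨_, rfl⟩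
  have hdrop : wordHeight (t.take (j + 1)) < 0 := hj_def ▸ Nat.find_spec hex
  have hnonneg : ∀ i ≤ j, 0 ≤ wordHeight (t.take i) := by
    rintro (_ | i) hi
    · simp
    · exact not_lt.1 (Nat.find_min hex (by omega))
  have hj : j < t.length := by
    by_contra! hj
    have := hnonneg j le_rfl
    rw [List.take_of_length_le hj, ht] at this
    omega
  have hsplit : t = t.take j ++ t[j] :: t.drop (j + 1) := by
    rw [← List.drop_eq_getElem_cons hj, List.take_append_drop]
  have hstep : wordHeight (t.take (j + 1)) = wordHeight (t.take j) + t[j].wt := by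
    rw [List.take_add_one, List.getElem?_eq_getElem hj, Option.toList_some, wordHeight_append,
      wordHeight_cons, wordHeight_nil, add_zero]
  have hpj := hnonneg j le_rfl
  -- the first descent below the axis goes from height `0` to `-1` by a `D` step
  have hD : t[j] = .D ∧ wordHeight (t.take j) = 0 := by
    have := hlow (j + 1)
    revert hstep
    cases t[j] <;> simp [Step.wt] <;> omega
  refine ⟨t.take j, t.drop (j + 1), hD.1 ▸ hsplit, ⟨fun i => ?_, hD.2⟩, fun i => ?_, ?_⟩
  · rw [List.take_take]
    exact hnonneg _ (min_le_right _ _)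
  · have := hlow (j + 1 + i)
    rw [List.take_add, wordHeight_append] at this
    omega
  · have := congrArg wordHeight (List.take_append_drop (j + 1) t)
    rw [wordHeight_append, ht, hstep, hD.1, hD.2] at this
    simp only [Step.wt] at this
    omega

theorem IsMotzkinWord.exists_of_U_cons {t : List Step} (h : IsMotzkinWord (.U :: t)) :
    ∃ p q, t = p ++ .D :: q ∧ IsMotzkinWord p ∧ IsMotzkinWord q := by
  refine exists_eq_append_D_cons_of_wordHeight (fun i => ?_) ?_
  · have := h.1 (i + 1)
    simp only [List.take_succ_cons, wordHeight_cons, Step.wt] at this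
    omega
  · have := h.2
    simp only [wordHeight_cons, Step.wt] at this
    omega

def firstReturnGlue :
    Unit ⊕ MotzkinWord ⊕ MotzkinWord ⊕ (MotzkinWord × MotzkinWord) → MotzkinWord
  | .inl _ => ⟨[], isMotzkinWord_nil⟩
  | .inr (.inl t) => ⟨.O2 :: t.1, (isMotzkinWord_cons_iff_of_wt_eq_zero rfl).2 t.2⟩
  | .inr (.inr (.inl t)) => ⟨.O1 :: t.1, (isMotzkinWord_cons_iff_of_wt_eq_zero rfl).2 t.2⟩
  | .inr (.inr (.inr (p, q))) => ⟨.U :: (p.1 ++ .D :: q.1), p.2.U_cons_append_D_cons q.2⟩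

theorem firstReturnGlue_injective : Function.Injective firstReturnGlue := by
  rintro (_ | t | t | ⟨p, q⟩) (_ | t' | t' | ⟨p', q'⟩) h <;>
    simp only [firstReturnGlue, Subtype.mk.injEq, List.cons.injEq, reduceCtorEq, false_and,
      List.nil_eq, List.cons_ne_nil, true_and] at h
  · rfl
  · rw [Subtype.ext h]
  · rw [Subtype.ext h]
  · obtain ⟨hp, hq⟩ := p.2.append_D_cons_inj p'.2 h
    rw [Subtype.ext hp, Subtype.ext hq]

theorem firstReturnGlue_surjective : Function.Surjective firstReturnGlue := by
  rintro ⟨_ | ⟨s, t⟩, h⟩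
  · exact ⟨.inl (), rfl⟩
  · cases s with
    | U =>
      obtain ⟨p, q, rfl, hp, hq⟩ := h.exists_of_U_cons
      exact ⟨.inr (.inr (.inr (⟨p, hp⟩, ⟨q, hq⟩))), rfl⟩
    | D => exact absurd h (not_isMotzkinWord_D_cons t)
    | O1 => exact ⟨.inr (.inr (.inl ⟨t, (isMotzkinWord_cons_iff_of_wt_eq_zero rfl).1 h⟩)), rfl⟩
    | O2 => exact ⟨.inr (.inl ⟨t, (isMotzkinWord_cons_iff_of_wt_eq_zero rfl).1 h⟩), rfl⟩

noncomputable def firstReturnEquiv :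
    Unit ⊕ MotzkinWord ⊕ MotzkinWord ⊕ (MotzkinWord × MotzkinWord) ≃ MotzkinWord :=
  .ofBijective firstReturnGlue ⟨firstReturnGlue_injective, firstReturnGlue_surjective⟩

theorem MotzkinWord.degree_firstReturnGlue
    (x : Unit ⊕ MotzkinWord ⊕ MotzkinWord ⊕ (MotzkinWord × MotzkinWord)) :
    (firstReturnGlue x).degree =
      Sum.elim (fun _ => 0) (Sum.elim (fun t => Step.O2.deg + t.degree)
        (Sum.elim (fun t => Step.O1.deg + t.degree)
          (fun pq => (Step.U.deg + Step.D.deg) + (pq.1.degree + pq.2.degree)))) x := by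
  rcases x with _ | t | t | ⟨p, q⟩ <;>
    simp only [firstReturnGlue, MotzkinWord.degree, wordDegree_cons, wordDegree_append,
      Sum.elim_inl, Sum.elim_inr]
  · rfl
  · abel

theorem Finsupp.eq_single_zero_add_single_one {M : Type*} [AddZeroClass M] (d : Fin 2 →₀ M) :
    d = single 0 (d 0) + single 1 (d 1) := by
  ext i
  fin_cases i <;> simp

theorem Finsupp.single_zero_add_single_one_inj {M : Type*} [AddZeroClass M] {a b a' b' : M} :
    single (0 : Fin 2) a + single 1 b = single 0 a' + single 1 b' ↔ a = a' ∧ b = b' := by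
  refine ⟨fun h => ⟨?_, ?_⟩, fun h => h.1 ▸ h.2 ▸ rfl⟩
  · simpa using congrArg (· 0) h
  · simpa using congrArg (· 1) h

section OfFn

variable {n : ℕ} (r : Fin n → Step)

theorem stepHeight_eq_wordHeight_take (i : ℕ) :
    stepHeight r i = wordHeight ((List.ofFn r).take i) := by
  rw [wordHeight, List.map_take, List.map_ofFn, List.sum_take_ofFn]
  rfl

theorem isMotzkinWord_ofFn_iff :
    IsMotzkinWord (List.ofFn r) ↔
      (∀ i ∈ Finset.range n, 0 ≤ stepHeight r (i + 1)) ∧ stepHeight r n = 0 := by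
  have htot : stepHeight r n = wordHeight (List.ofFn r) := by
    rw [stepHeight_eq_wordHeight_take, List.take_of_length_le (by simp)]
  simp only [IsMotzkinWord, htot, stepHeight_eq_wordHeight_take, Finset.mem_range]
  refine ⟨fun h => ⟨fun i _ => h.1 (i + 1), h.2⟩, fun h => ⟨?_, h.2⟩⟩
  rintro (_ | i)
  · simp
  · by_cases hi : i < n
    · exact h.1 i hi
    · rw [List.take_of_length_le (by simp; omega), h.2]

theorem wordDegree_ofFn :
    wordDegree (List.ofFn r) =
      single 0 n + single 1 (Finset.univ.filter fun i => r i = .U ∨ r i = .O1).card := by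
  simp only [wordDegree, List.map_ofFn, List.sum_ofFn, Function.comp_apply, Step.deg_eq,
    sum_add_distrib, ← Finsupp.single_finsetSum, card_filter]
  simp

end OfFn

def ofFnMotzkin (n k : ℕ) :
    {r : Fin n → Step //
      (∀ i ∈ Finset.range n, 0 ≤ stepHeight r (i + 1)) ∧
      stepHeight r n = 0 ∧
      (Finset.univ.filter fun i => r i = Step.U ∨ r i = Step.O1).card = k} →
    {w : MotzkinWord // w.degree = single 0 n + single 1 k} :=
  fun r => ⟨⟨List.ofFn r.1, (isMotzkinWord_ofFn_iff r.1).2 ⟨r.2.1, r.2.2.1⟩⟩,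
    by rw [MotzkinWord.degree, wordDegree_ofFn, r.2.2.2]⟩

theorem ofFnMotzkin_bijective (n k : ℕ) : Function.Bijective (ofFnMotzkin n k) := by
  refine ⟨fun r r' h => Subtype.ext (List.ofFn_injective (congrArg (·.1.1) h)), ?_⟩
  rintro ⟨⟨l, hl⟩, hdeg⟩
  have hdeg' := wordDegree_ofFn l.get
  rw [List.ofFn_get, show wordDegree l = _ from hdeg,
    Finsupp.single_zero_add_single_one_inj] at hdeg'
  obtain ⟨rfl, hk⟩ := hdeg'
  rw [← List.ofFn_get l, isMotzkinWord_ofFn_iff] at hl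
  exact ⟨⟨l.get, hl.1, hl.2, hk.symm⟩, by simp [ofFnMotzkin]⟩

theorem bicoloredMotzkinCount_eq_card (n k : ℕ) :
    bicoloredMotzkinCount n k = Nat.card {w : MotzkinWord // w.degree = single 0 n + single 1 k} :=
  Nat.card_eq_of_bijective _ (ofFnMotzkin_bijective n k)

instance MotzkinWord.finite_fiber (d : Fin 2 →₀ ℕ) : Finite {w : MotzkinWord // w.degree = d} := by
  rw [d.eq_single_zero_add_single_one]
  exact Finite.of_surjective _ (ofFnMotzkin_bijective _ _).2

theorem Mser_eq_genSeries : Mser = genSeries ℚ MotzkinWord.degree := by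
  ext d
  have hcount := bicoloredMotzkinCount_eq_card (d 0) (d 1)
  rw [← d.eq_single_zero_add_single_one] at hcount
  rw [coeff_genSeries, ← hcount]
  rfl

theorem genSeries_motzkinWord_degree (R : Type*) [CommSemiring R] :
    genSeries R MotzkinWord.degree = 1 + (X 0 + X 0 * X 1) * genSeries R MotzkinWord.degree
      + X 1 * (X 0) ^ 2 * genSeries R MotzkinWord.degree ^ 2 := by
  have hdecomp := genSeries_congr R firstReturnEquiv MotzkinWord.degree_firstReturnGlue
  rw [genSeries_sumElim, genSeries_sumElim, genSeries_sumElim, genSeries_unit,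
    genSeries_const_add, genSeries_const_add, genSeries_const_add, genSeries_prod] at hdecomp
  have hO2 : monomial Step.O2.deg (1 : R) = X 0 := rfl
  have hO1 : monomial Step.O1.deg (1 : R) = X 0 * X 1 := by
    rw [X, X, monomial_mul_monomial, one_mul]; rfl
  have hUD : monomial (Step.U.deg + Step.D.deg) (1 : R) = X 1 * X 0 ^ 2 := by
    have hdeg : Step.U.deg + Step.D.deg = single 1 1 + single 0 2 := by
      ext i
      fin_cases i <;> simp [Step.deg]
    rw [X, X_pow_eq, monomial_mul_monomial, one_mul, hdeg]
  conv_lhs => rw [hdecomp, hO2, hO1, hUD]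
  rw [monomial_zero_one]
  ring

open MvPowerSeries in
/-- First-return functional equation for bicolored Motzkin paths:
`M = 1 + (X + X·U)·M + U·X²·M²`. -/
theorem Mser_functional_equation :
    Mser = 1 + (X 0 + X 0 * X 1) * Mser + X 1 * (X 0) ^ 2 * Mser ^ 2 := by
  rw [Mser_eq_genSeries]
  exact genSeries_motzkinWord_degree ℚ
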